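/- (Hadamard integral condition, C¹ case) Let f : ℝ^n → ℝ^n be a C¹ map and c : [0,∞) → (0,∞) a locally integrable function with ∫₀^∞ c(t) dt = ∞, such that σ(df(x)) ≥ c(‖x‖) for all x ∈ ℝ^n. Then f is proper: there is no sequence x_k with ‖x_k‖ → ∞ and f(x_k) convergent. -/

import Mathlib

/-!
Let `m r` be the least stretch `‖df x v‖` over `‖x‖ = r`, `‖v‖ = 1`: it is continuous,
`c ≤ m`, and hence `∫ m = ∞`. The potential `Φ x = ∫₀^‖x‖ m` (suitably smoothed at the origin)
has `‖dΦ x‖ ≤ m ‖x‖`, so along a lift through `f` of a segment of length `L`, `Φ` grows by at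
most `L`. Lifts of segments therefore stay in a compact sublevel set of `Φ`, on which `f` has
local inverses of uniform size, and so every segment lifts. Lifting the segments from a fixed
base point `f z₀` gives, by continuity of lifts in parameters, a continuous right inverse `g` of
`f`; and `g ∘ f = id` since both are lifts of `f` through the local homeomorphism `f` agreeing at
`z₀`. Thus `f` is a homeomorphism, and `f (x k) → y` forces `x k → g y`.
-/

noncomputable def conorm {n : ℕ}
    (A : EuclideanSpace ℝ (Fin n) →L[ℝ] EuclideanSpace ℝ (Fin n)) : ℝ :=
  sInf {y : ℝ | ∃ v : EuclideanSpace ℝ (Fin n), ‖v‖ = 1 ∧ y = ‖A v‖}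

open Set Filter Metric Topology Bornology intervalIntegral unitInterval

theorem IsLocalHomeomorph.exists_pos_forall_ball_subset_target {X Y : Type*}
    [TopologicalSpace X] [PseudoMetricSpace Y] {f : X → Y} (hf : IsLocalHomeomorph f)
    {K : Set X} (hK : IsCompact K) :
    ∃ r > 0, ∀ x ∈ K, ∃ φ : OpenPartialHomeomorph X Y,
      ⇑φ = f ∧ x ∈ φ.source ∧ ball (f x) r ⊆ φ.target := by
  have key : ∀ᶠ r in 𝓝 (0 : ℝ), ∀ x ∈ K, ∃ φ : OpenPartialHomeomorph X Y,
      ⇑φ = f ∧ x ∈ φ.source ∧ ball (f x) r ⊆ φ.target := by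
    refine hK.eventually_forall_of_forall_eventually fun x _ => ?_
    obtain ⟨φ, hxφ, rfl⟩ := hf x
    obtain ⟨ρ, hρ, hρφ⟩ := Metric.isOpen_iff.1 φ.open_target _ (φ.map_source hxφ)
    have hU : φ.source ∩ φ ⁻¹' ball (φ x) (ρ / 2) ∈ 𝓝 x :=
      (φ.isOpen_inter_preimage isOpen_ball).mem_nhds ⟨hxφ, mem_ball_self (half_pos hρ)⟩
    filter_upwards [prod_mem_nhds (Iio_mem_nhds (half_pos hρ)) hU] with z ⟨hz₁, hz₂, hz₃⟩
    refine ⟨φ, rfl, hz₂, (ball_subset_ball' ?_).trans hρφ⟩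
    linarith [mem_ball.1 hz₃, (mem_Iio.1 hz₁ : z.1 < ρ / 2)]
  obtain ⟨r, hr, hr0⟩ := ((key.filter_mono nhdsWithin_le_nhds).and
    (self_mem_nhdsWithin : Ioi (0 : ℝ) ∈ 𝓝[>] 0)).exists
  exact ⟨r, hr0, hr⟩

theorem exists_extend_lift_Icc {X Y : Type*} [TopologicalSpace X] [TopologicalSpace Y]
    {f : X → Y} {p : ℝ → Y} {γ : ℝ → X} {T T' : ℝ} (hT : 0 ≤ T) (hTT' : T ≤ T')
    (hγ : ContinuousOn γ (Icc 0 T)) (hγp : EqOn (f ∘ γ) p (Icc 0 T))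
    (φ : OpenPartialHomeomorph X Y) (hφ : ⇑φ = f) (hγT : γ T ∈ φ.source)
    (hp : ContinuousOn p (Icc T T')) (hpφ : MapsTo p (Icc T T') φ.target) :
    ∃ γ' : ℝ → X, ContinuousOn γ' (Icc 0 T') ∧ EqOn (f ∘ γ') p (Icc 0 T') ∧ γ' 0 = γ 0 := by
  subst hφ
  have hjoin : φ.symm (p T) = γ T := by
    rw [← hγp ⟨hT, le_rfl⟩, Function.comp_apply, φ.left_inv hγT]
  have hleft : EqOn (fun t => if t ≤ T then γ t else φ.symm (p t)) γ (Icc 0 T) :=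
    fun t ht => if_pos ht.2
  have hright : EqOn (fun t => if t ≤ T then γ t else φ.symm (p t)) (φ.symm ∘ p) (Icc T T') := by
    intro t ht
    by_cases htT : t ≤ T
    · obtain rfl : t = T := le_antisymm htT ht.1
      simp [hjoin]
    · exact if_neg htT
  refine ⟨fun t => if t ≤ T then γ t else φ.symm (p t), ?_, ?_, if_pos hT⟩
  · rw [← Icc_union_Icc_eq_Icc hT hTT']
    exact (hγ.congr hleft).union_of_isClosed
      ((φ.continuousOn_symm.comp hp hpφ).congr hright) isClosed_Icc isClosed_Icc
  · rw [← Icc_union_Icc_eq_Icc hT hTT']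
    rintro t (ht | ht)
    · simpa [hleft ht] using hγp ht
    · simp only [Function.comp_apply, hright ht, φ.right_inv (hpφ ht)]

theorem IsLocalHomeomorph.exists_lift_Icc_of_isCompact {X Y : Type*} [TopologicalSpace X]
    [PseudoMetricSpace Y] {f : X → Y} (hf : IsLocalHomeomorph f) {K : Set X} (hK : IsCompact K)
    {p : ℝ → Y} (hp : ContinuousOn p (Icc 0 1)) {x₀ : X} (hx₀ : f x₀ = p 0)
    (hbound : ∀ T ∈ Icc (0 : ℝ) 1, ∀ γ : ℝ → X, ContinuousOn γ (Icc 0 T) → γ 0 = x₀ →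
      EqOn (f ∘ γ) p (Icc 0 T) → γ T ∈ K) :
    ∃ γ : ℝ → X, ContinuousOn γ (Icc 0 1) ∧ γ 0 = x₀ ∧ EqOn (f ∘ γ) p (Icc 0 1) := by
  obtain ⟨r, hr, hK⟩ := hf.exists_pos_forall_ball_subset_target hK
  obtain ⟨δ, hδ, hpδ⟩ := Metric.uniformContinuousOn_iff.1
    (isCompact_Icc.uniformContinuousOn_of_continuous hp) r hr
  obtain ⟨N, hN⟩ := exists_nat_one_div_lt hδ
  have hNpos : (0 : ℝ) < N + 1 := by positivity
  suffices ∀ k ≤ N + 1, ∃ γ : ℝ → X, ContinuousOn γ (Icc 0 (k / (N + 1))) ∧ γ 0 = x₀ ∧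
      EqOn (f ∘ γ) p (Icc 0 (k / (N + 1))) by
    simpa [div_self hNpos.ne'] using this (N + 1) le_rfl
  intro k
  induction k with
  | zero =>
    refine fun _ => ⟨fun _ => x₀, continuousOn_const, rfl, fun t ht => ?_⟩
    obtain rfl : t = 0 := by simpa using ht
    exact hx₀
  | succ k ih =>
    intro hk
    obtain ⟨γ, hγ, hγ0, hγp⟩ := ih (Nat.le_of_succ_le hk)
    set T : ℝ := k / (N + 1)
    set T' : ℝ := (k + 1 : ℕ) / (N + 1)
    have hT : 0 ≤ T := by positivity
    have hTT' : T ≤ T' := by simp only [T, T']; gcongr; simp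
    have hT'1 : T' ≤ 1 := by
      rw [div_le_one hNpos]
      exact_mod_cast hk
    have hT'T : T' - T = 1 / (N + 1) := by
      simp only [T, T']
      push_cast
      ring
    obtain ⟨φ, hφ, hsrc, hball⟩ :=
      hK _ (hbound T ⟨hT, hTT'.trans hT'1⟩ γ hγ hγ0 hγp)
    have hmaps : MapsTo p (Icc T T') φ.target := fun t ht => hball <| by
      rw [← Function.comp_apply (f := f), hγp ⟨hT, le_rfl⟩, mem_ball]
      refine hpδ t ⟨hT.trans ht.1, ht.2.trans hT'1⟩ T ⟨hT, hTT'.trans hT'1⟩ ?_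
      rw [Real.dist_eq, abs_of_nonneg (sub_nonneg.2 ht.1)]
      linarith [ht.2]
    obtain ⟨γ', hγ', hγ'p, hγ'0⟩ := exists_extend_lift_Icc hT hTT' hγ hγp φ hφ hsrc
      (hp.mono (Icc_subset_Icc hT hT'1)) hmaps
    exact ⟨γ', hγ', hγ'0.trans hγ0, hγ'p⟩

theorem IsLocalHomeomorph.exists_homeomorph_of_lift_segment {X Y : Type*}
    [TopologicalSpace X] [T2Space X] [PreconnectedSpace X] [Nonempty X]
    [NormedAddCommGroup Y] [NormedSpace ℝ Y] {f : X → Y} (hf : IsLocalHomeomorph f)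
    (hlift : ∀ x₀ b, ∃ γ : ℝ → X, ContinuousOn γ (Icc 0 1) ∧ γ 0 = x₀ ∧
      EqOn (f ∘ γ) (fun t => f x₀ + t • (b - f x₀)) (Icc 0 1)) :
    ∃ e : X ≃ₜ Y, ⇑e = f := by
  obtain ⟨z₀⟩ := ‹Nonempty X›
  choose Γ hΓc hΓ0 hΓf using hlift z₀
  have hsep := T2Space.isSeparatedMap f
  let H : C(I × Y, Y) := ⟨fun q => f z₀ + (q.1 : ℝ) • (q.2 - f z₀), by fun_prop⟩
  have hΓI : ∀ b, Continuous fun t : I => Γ b t :=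
    fun b => (hΓc b).comp_continuous continuous_subtype_val fun t => t.2
  have hG : Continuous fun q : I × Y => Γ q.2 q.1 :=
    hf.continuous_lift hsep H (funext fun q => hΓf q.2 q.1.2)
      (by simpa [hΓ0] using continuous_const) hΓI
  have hg : Continuous fun b => Γ b 1 := hG.comp (Continuous.prodMk_right (1 : I))
  have hfg : ∀ b, f (Γ b 1) = b := fun b => by simpa using hΓf b (right_mem_Icc.2 zero_le_one)
  have hgz₀ : Γ (f z₀) 1 = z₀ := by
    have := hsep.eq_of_comp_eq hf.isLocallyInjective (hΓI (f z₀)) continuous_const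
      (funext fun t => by simpa using hΓf (f z₀) t.2) 0 (hΓ0 _)
    exact congrFun this 1
  have hgf : (fun x => Γ (f x) 1) = id :=
    hsep.eq_of_comp_eq hf.isLocallyInjective (hg.comp hf.continuous) continuous_id
      (funext fun x => hfg (f x)) z₀ hgz₀
  exact ⟨⟨⟨f, fun b => Γ b 1, congrFun hgf, hfg⟩, hf.continuous, hg⟩, rfl⟩

theorem isLocalHomeomorph_of_hasStrictFDerivAt {𝕜 E F : Type*} [NontriviallyNormedField 𝕜]
    [NormedAddCommGroup E] [NormedSpace 𝕜 E] [CompleteSpace E]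
    [NormedAddCommGroup F] [NormedSpace 𝕜 F] {f : E → F}
    (hf : ∀ x, ∃ f' : E ≃L[𝕜] F, HasStrictFDerivAt f (f' : E →L[𝕜] F) x) :
    IsLocalHomeomorph f := fun x =>
  let ⟨_, h⟩ := hf x
  ⟨h.toOpenPartialHomeomorph f, h.mem_toOpenPartialHomeomorph_source,
    h.toOpenPartialHomeomorph_coe.symm⟩

theorem HasStrictFDerivAt.hasDerivWithinAt_of_comp {𝕜 E F : Type*} [NontriviallyNormedField 𝕜]
    [NormedAddCommGroup E] [NormedSpace 𝕜 E] [CompleteSpace E]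
    [NormedAddCommGroup F] [NormedSpace 𝕜 F]
    {f : E → F} {f' : E ≃L[𝕜] F} {γ : 𝕜 → E} {w : F} {s : Set 𝕜} {t : 𝕜}
    (hf : HasStrictFDerivAt f (f' : E →L[𝕜] F) (γ t)) (hγ : ContinuousWithinAt γ s t)
    (hfγ : HasDerivWithinAt (f ∘ γ) w s t) : HasDerivWithinAt γ (f'.symm w) s t := by
  have hev : γ =ᶠ[𝓝[s] t] hf.localInverse f f' (γ t) ∘ (f ∘ γ) :=
    (hγ.eventually hf.eventually_left_inverse).mono fun _ h => h.symm
  exact (hf.to_localInverse.hasFDerivAt.comp_hasDerivWithinAt t hfγ).congr_of_eventuallyEq hev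
    (hf.localInverse_apply_image).symm

theorem ContinuousLinearMap.exists_equiv_of_mul_norm_le {E : Type*} [NormedAddCommGroup E]
    [NormedSpace ℝ E] [FiniteDimensional ℝ E] {A : E →L[ℝ] E} {k : ℝ} (hk : 0 < k)
    (hA : ∀ v, k * ‖v‖ ≤ ‖A v‖) : ∃ B : E ≃L[ℝ] E, (B : E →L[ℝ] E) = A := by
  have hinj : Function.Injective A := (injective_iff_map_eq_zero A).2 fun v hv => by
    have := hA v
    rw [hv, norm_zero] at this
    exact norm_eq_zero.1 (le_antisymm (nonpos_of_mul_nonpos_right this hk) (norm_nonneg v))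
  exact ⟨(LinearEquiv.ofInjectiveEndo (A : E →ₗ[ℝ] E) hinj).toContinuousLinearEquiv, rfl⟩

section Potential

variable {E : Type*} [NormedAddCommGroup E] {m : ℝ → ℝ}

noncomputable def radialWeight (m : ℝ → ℝ) (s : ℝ) : ℝ := m √s / (2 * max 1 √s)

/-- In terms of `ρ = √s`, `potential m x = ∫₀^‖x‖ m ρ * min ρ 1 dρ`: the variable `s = ρ ^ 2` makes
it differentiable at the origin, and the factor `min ρ 1` keeps `‖fderiv ℝ (potential m) x‖` below
`m ‖x‖`. -/
noncomputable def potential (m : ℝ → ℝ) (x : E) : ℝ := ∫ s in 0..‖x‖ ^ 2, radialWeight m s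

theorem continuous_radialWeight (hm : Continuous m) : Continuous (radialWeight m) :=
  (hm.comp Real.continuous_sqrt).div (by fun_prop) fun _ => by positivity

theorem continuous_potential (hm : Continuous m) : Continuous (potential m : E → ℝ) :=
  (continuous_iff_continuousAt.2 fun u =>
    ((continuous_radialWeight hm).integral_hasStrictDerivAt 0 u).hasDerivAt.continuousAt).comp
      (continuous_norm.pow 2)

theorem integral_le_integral_radialWeight (hm : Continuous m) (hm0 : ∀ r, 0 ≤ m r) {r : ℝ}
    (hr : 1 ≤ r) : ∫ t in 1..r, m t ≤ ∫ s in 0..r ^ 2, radialWeight m s := by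
  have hw := continuous_radialWeight hm
  have hsubst : ∫ s in 1..r ^ 2, radialWeight m s = ∫ t in 1..r, m t := by
    have := integral_comp_mul_deriv (a := 1) (b := r) (f := fun t => t ^ 2) (f' := fun t => 2 * t)
      (fun t _ => by simpa using hasDerivAt_pow 2 t) (by fun_prop) hw
    rw [one_pow] at this
    rw [← this]
    refine integral_congr fun t ht => ?_
    rw [uIcc_of_le hr] at ht
    have ht0 : 0 < t := zero_lt_one.trans_le ht.1
    simp only [Function.comp_apply, radialWeight, Real.sqrt_sq ht0.le, max_eq_right ht.1]
    field_simp
  rw [← integral_add_adjacent_intervals (b := 1) (hw.intervalIntegrable _ _)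
    (hw.intervalIntegrable _ _), hsubst]
  have : 0 ≤ ∫ s in (0 : ℝ)..1, radialWeight m s :=
    integral_nonneg zero_le_one fun s _ => div_nonneg (hm0 _) (by positivity)
  linarith

theorem tendsto_potential_cobounded (hm : Continuous m) (hm0 : ∀ r, 0 ≤ m r)
    (hdiv : Tendsto (fun r => ∫ t in 0..r, m t) atTop atTop) :
    Tendsto (potential m : E → ℝ) (cobounded E) atTop := by
  have h1 : Tendsto (fun r => ∫ t in 1..r, m t) atTop atTop := by
    refine (tendsto_atTop_add_const_right _ (-∫ t in (0 : ℝ)..1, m t) hdiv).congr fun r => ?_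
    rw [← integral_interval_sub_left (a := 0) (b := r) (c := 1) (hm.intervalIntegrable _ _)
      (hm.intervalIntegrable _ _)]
    ring
  show Tendsto ((fun r => ∫ s in 0..r ^ 2, radialWeight m s) ∘ norm) _ _
  refine (tendsto_atTop_mono' _ ?_ h1).comp tendsto_norm_cobounded_atTop
  filter_upwards [eventually_ge_atTop 1] with r hr
  exact integral_le_integral_radialWeight hm hm0 hr

theorem isCompact_potential_le [ProperSpace E] (hm : Continuous m) (hm0 : ∀ r, 0 ≤ m r)
    (hdiv : Tendsto (fun r => ∫ t in 0..r, m t) atTop atTop) (B : ℝ) :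
    IsCompact {x : E | potential m x ≤ B} := by
  refine isCompact_of_isClosed_isBounded (isClosed_le (continuous_potential hm) continuous_const) ?_
  rw [isBounded_def]
  filter_upwards [(tendsto_potential_cobounded hm hm0 hdiv).eventually_gt_atTop B] with x hx
  exact not_le.2 hx

variable [InnerProductSpace ℝ E]

theorem hasFDerivAt_potential (hm : Continuous m) (x : E) :
    HasFDerivAt (potential m) (radialWeight m (‖x‖ ^ 2) • 2 • innerSL ℝ x) x :=
  ((continuous_radialWeight hm).integral_hasStrictDerivAt 0 _).hasDerivAt.comp_hasFDerivAt x
    (hasStrictFDerivAt_norm_sq x).hasFDerivAt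

theorem norm_fderiv_potential_le (hm : Continuous m) (hm0 : ∀ r, 0 ≤ m r) (x : E) :
    ‖fderiv ℝ (potential m) x‖ ≤ m ‖x‖ := by
  have hmax : 0 < max 1 ‖x‖ := lt_max_of_lt_left one_pos
  rw [(hasFDerivAt_potential hm x).fderiv]
  calc ‖radialWeight m (‖x‖ ^ 2) • 2 • innerSL ℝ x‖ = m ‖x‖ * (‖x‖ / max 1 ‖x‖) := by
        rw [norm_smul, RCLike.norm_nsmul ℝ, innerSL_apply_norm, radialWeight,
          Real.sqrt_sq (norm_nonneg x),
          Real.norm_of_nonneg (div_nonneg (hm0 _) (by positivity)), nsmul_eq_mul]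
        field_simp
        norm_num
    _ ≤ m ‖x‖ := mul_le_of_le_one_right (hm0 _) ((div_le_one hmax).2 (le_max_right _ _))

theorem potential_le_add_of_hasDerivWithinAt (hm : Continuous m) (hm0 : ∀ r, 0 ≤ m r)
    {γ γ' : ℝ → E} {T L : ℝ} (hγ : ∀ t ∈ Icc 0 T, HasDerivWithinAt γ (γ' t) (Icc 0 T) t)
    (hL : ∀ t ∈ Icc 0 T, m ‖γ t‖ * ‖γ' t‖ ≤ L) {t : ℝ} (ht : t ∈ Icc 0 T) :
    potential m (γ t) ≤ potential m (γ 0) + L * t := by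
  have hdiff : ∀ x : E, HasFDerivAt (potential m) (fderiv ℝ (potential m) x) x :=
    fun x => (hasFDerivAt_potential hm x).differentiableAt.hasFDerivAt
  have := (convex_Icc 0 T).norm_image_sub_le_of_norm_hasDerivWithin_le
    (f := potential m ∘ γ) (fun s hs => (hdiff (γ s)).comp_hasDerivWithinAt s (hγ s hs))
    (fun s hs => ((fderiv ℝ (potential m) (γ s)).le_opNorm _).trans
      ((mul_le_mul_of_nonneg_right (norm_fderiv_potential_le hm hm0 _) (norm_nonneg _)).trans
        (hL s hs))) (left_mem_Icc.2 (ht.1.trans ht.2)) ht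
  rw [sub_zero, Real.norm_of_nonneg ht.1, Real.norm_eq_abs] at this
  simp only [Function.comp_apply] at this
  linarith [(abs_le.1 this).2]

end Potential

section RadialConorm

variable {E : Type*} [NormedAddCommGroup E] [NormedSpace ℝ E]

/-- The infimum of `‖g x v‖` over `‖x‖ = r`, `‖v‖ = 1`, taken over a fixed compact set so that it
is continuous in `r`. -/
noncomputable def radialConorm (g : E → E →L[ℝ] E) (r : ℝ) : ℝ :=
  sInf ((fun p : E × E => ‖g (r • p.1) p.2‖) '' (sphere 0 1 ×ˢ sphere 0 1))

theorem continuous_radialConorm [ProperSpace E] {g : E → E →L[ℝ] E} (hg : Continuous g) :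
    Continuous (radialConorm g) :=
  ((isCompact_sphere 0 1).prod (isCompact_sphere 0 1)).continuous_sInf (by fun_prop)

theorem radialConorm_nonneg (g : E → E →L[ℝ] E) (r : ℝ) : 0 ≤ radialConorm g r :=
  Real.sInf_nonneg fun _ ⟨_, _, hy⟩ => hy ▸ norm_nonneg _

variable [Nontrivial E]

theorem exists_mem_sphere_smul_eq (x : E) : ∃ u ∈ sphere (0 : E) 1, ‖x‖ • u = x := by
  rcases eq_or_ne x 0 with rfl | hx
  · obtain ⟨u, hu⟩ := exists_norm_eq E zero_le_one
    exact ⟨u, mem_sphere_zero_iff_norm.2 hu, by simp⟩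
  · exact ⟨‖x‖⁻¹ • x, by simp [norm_smul, hx], by simp [smul_smul, hx]⟩

theorem radialConorm_mul_norm_le (g : E → E →L[ℝ] E) (x v : E) :
    radialConorm g ‖x‖ * ‖v‖ ≤ ‖g x v‖ := by
  obtain ⟨u, hu, hxu⟩ := exists_mem_sphere_smul_eq x
  obtain ⟨w, hw, hvw⟩ := exists_mem_sphere_smul_eq v
  have hle : radialConorm g ‖x‖ ≤ ‖g x w‖ := by
    conv_rhs => rw [← hxu]
    exact csInf_le ⟨0, fun _ ⟨_, _, hy⟩ => hy ▸ norm_nonneg _⟩ ⟨(u, w), ⟨hu, hw⟩, rfl⟩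
  calc radialConorm g ‖x‖ * ‖v‖ ≤ ‖g x w‖ * ‖v‖ := mul_le_mul_of_nonneg_right hle (norm_nonneg v)
    _ = ‖g x (‖v‖ • w)‖ := by rw [map_smul, norm_smul, norm_norm, mul_comm]
    _ = ‖g x v‖ := by rw [hvw]

theorem le_radialConorm {g : E → E →L[ℝ] E} {c : ℝ → ℝ}
    (hc : ∀ x v, c ‖x‖ * ‖v‖ ≤ ‖g x v‖) {r : ℝ} (hr : 0 ≤ r) : c r ≤ radialConorm g r := by
  obtain ⟨u, hu⟩ := exists_norm_eq E zero_le_one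
  have hu' : u ∈ sphere (0 : E) 1 := mem_sphere_zero_iff_norm.2 hu
  refine le_csInf ⟨_, (u, u), ⟨hu', hu'⟩, rfl⟩ ?_
  rintro _ ⟨p, ⟨hp₁, hp₂⟩, rfl⟩
  rw [mem_sphere_zero_iff_norm] at hp₁ hp₂
  simpa [norm_smul, hp₁, hp₂, abs_of_nonneg hr] using hc (r • p.1) p.2

end RadialConorm

section Lifting

variable {E : Type*} [NormedAddCommGroup E] [InnerProductSpace ℝ E] [FiniteDimensional ℝ E]
  {f : E → E} {m : ℝ → ℝ}

theorem potential_le_of_lift_segment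
    (hB : ∀ x, ∃ B : E ≃L[ℝ] E, HasStrictFDerivAt f (B : E →L[ℝ] E) x)
    (hm : Continuous m) (hm0 : ∀ r, 0 ≤ m r) (hmf : ∀ x v, m ‖x‖ * ‖v‖ ≤ ‖fderiv ℝ f x v‖)
    {a w : E} {T : ℝ} {γ : ℝ → E} (hγ : ContinuousOn γ (Icc 0 T))
    (hγf : EqOn (f ∘ γ) (fun t => a + t • w) (Icc 0 T)) {t : ℝ} (ht : t ∈ Icc 0 T) :
    potential m (γ t) ≤ potential m (γ 0) + ‖w‖ * t := by
  choose B hB using hB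
  refine potential_le_add_of_hasDerivWithinAt hm hm0 (γ' := fun s => (B (γ s)).symm w)
    (fun s hs => ?_) (fun s _ => ?_) ht
  · have hseg : HasDerivAt (fun t : ℝ => a + t • w) w s := by
      simpa using ((hasDerivAt_id s).smul_const w).const_add a
    exact (hB (γ s)).hasDerivWithinAt_of_comp (hγ s hs)
      (hseg.hasDerivWithinAt.congr hγf (hγf hs))
  · simpa [(hB (γ s)).hasFDerivAt.fderiv] using hmf (γ s) ((B (γ s)).symm w)

theorem exists_lift_segment
    (hB : ∀ x, ∃ B : E ≃L[ℝ] E, HasStrictFDerivAt f (B : E →L[ℝ] E) x)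
    (hm : Continuous m) (hm0 : ∀ r, 0 ≤ m r)
    (hdiv : Tendsto (fun r => ∫ t in 0..r, m t) atTop atTop)
    (hmf : ∀ x v, m ‖x‖ * ‖v‖ ≤ ‖fderiv ℝ f x v‖) (x₀ b : E) :
    ∃ γ : ℝ → E, ContinuousOn γ (Icc 0 1) ∧ γ 0 = x₀ ∧
      EqOn (f ∘ γ) (fun t => f x₀ + t • (b - f x₀)) (Icc 0 1) :=
  (isLocalHomeomorph_of_hasStrictFDerivAt hB).exists_lift_Icc_of_isCompact
    (isCompact_potential_le hm hm0 hdiv (potential m x₀ + ‖b - f x₀‖)) (by fun_prop) (by simp)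
    fun T hT γ hγ hγ0 hγf => by
      have := potential_le_of_lift_segment hB hm hm0 hmf hγ hγf ⟨hT.1, le_rfl⟩
      rw [hγ0] at this
      rw [mem_ofPred_eq]
      nlinarith [norm_nonneg (b - f x₀), hT.2]

end Lifting

theorem ContDiff.exists_homeomorph_of_mul_norm_le_fderiv {E : Type*} [NormedAddCommGroup E]
    [InnerProductSpace ℝ E] [FiniteDimensional ℝ E] [Nontrivial E] {f : E → E}
    (hf : ContDiff ℝ 1 f) {c : ℝ → ℝ} (hcpos : ∀ t, 0 ≤ t → 0 < c t)
    (hcint : ∀ T, IntervalIntegrable c MeasureTheory.volume 0 T)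
    (hdiv : Tendsto (fun T => ∫ t in 0..T, c t) atTop atTop)
    (hc : ∀ x v, c ‖x‖ * ‖v‖ ≤ ‖fderiv ℝ f x v‖) : ∃ e : E ≃ₜ E, ⇑e = f := by
  set m := radialConorm (fderiv ℝ f)
  have hm : Continuous m := continuous_radialConorm (hf.continuous_fderiv one_ne_zero)
  have hmf : ∀ x v, m ‖x‖ * ‖v‖ ≤ ‖fderiv ℝ f x v‖ := radialConorm_mul_norm_le _
  have hcm : ∀ t, 0 ≤ t → c t ≤ m t := fun _ => le_radialConorm hc
  have hB : ∀ x, ∃ B : E ≃L[ℝ] E, HasStrictFDerivAt f (B : E →L[ℝ] E) x := fun x => by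
    obtain ⟨B, hB⟩ := (fderiv ℝ f x).exists_equiv_of_mul_norm_le
      ((hcpos _ (norm_nonneg x)).trans_le (hcm _ (norm_nonneg x))) (hmf x)
    exact ⟨B, hB ▸ hf.hasStrictFDerivAt one_ne_zero⟩
  have hmdiv : Tendsto (fun T => ∫ t in 0..T, m t) atTop atTop := by
    refine tendsto_atTop_mono' _ ?_ hdiv
    filter_upwards [eventually_ge_atTop 0] with T hT
    exact integral_mono_on hT (hcint T) (hm.intervalIntegrable _ _) fun t ht => hcm t ht.1
  exact (isLocalHomeomorph_of_hasStrictFDerivAt hB).exists_homeomorph_of_lift_segment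
    (exists_lift_segment hB hm (radialConorm_nonneg _) hmdiv hmf)

theorem conorm_mul_norm_le {n : ℕ}
    (A : EuclideanSpace ℝ (Fin n) →L[ℝ] EuclideanSpace ℝ (Fin n)) (v : EuclideanSpace ℝ (Fin n)) :
    conorm A * ‖v‖ ≤ ‖A v‖ := by
  rcases eq_or_ne v 0 with rfl | hv
  · simp
  have hle : conorm A ≤ ‖A (‖v‖⁻¹ • v)‖ :=
    csInf_le ⟨0, fun _ ⟨_, _, hy⟩ => hy ▸ norm_nonneg _⟩ ⟨_, by simp [norm_smul, hv], rfl⟩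
  rw [map_smul, norm_smul, norm_inv, norm_norm] at hle
  rwa [le_inv_mul_iff₀ (norm_pos_iff.2 hv), mul_comm] at hle

theorem hadamard_integral_proper {n : ℕ}
    (f : EuclideanSpace ℝ (Fin n) → EuclideanSpace ℝ (Fin n))
    (hf : ContDiff ℝ 1 f) (c : ℝ → ℝ)
    (hcpos : ∀ t : ℝ, 0 ≤ t → 0 < c t)
    (hcint : ∀ T : ℝ, IntervalIntegrable c MeasureTheory.volume 0 T)
    (hdiv : Filter.Tendsto (fun T => ∫ t in (0 : ℝ)..T, c t) Filter.atTop Filter.atTop)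
    (h : ∀ x, c ‖x‖ ≤ conorm (fderiv ℝ f x)) :
    ¬ ∃ (x : ℕ → EuclideanSpace ℝ (Fin n)) (y : EuclideanSpace ℝ (Fin n)),
      Filter.Tendsto (fun k => ‖x k‖) Filter.atTop Filter.atTop ∧
      Filter.Tendsto (fun k => f (x k)) Filter.atTop (nhds y) := by
  rintro ⟨x, y, hx, hy⟩
  rcases Nat.eq_zero_or_pos n with rfl | hn
  · exact not_tendsto_nhds_of_tendsto_atTop hx 0
      (tendsto_const_nhds.congr fun k => by simp [Subsingleton.elim (x k) 0])
  have : NeZero n := ⟨hn.ne'⟩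
  obtain ⟨e, rfl⟩ := hf.exists_homeomorph_of_mul_norm_le_fderiv hcpos hcint hdiv fun x v =>
    (mul_le_mul_of_nonneg_right (h x) (norm_nonneg v)).trans (conorm_mul_norm_le _ v)
  have hxe : Tendsto x atTop (𝓝 (e.symm y)) :=
    ((e.symm.continuous.tendsto y).comp hy).congr fun k => e.symm_apply_apply (x k)
  exact not_tendsto_nhds_of_tendsto_atTop hx _ hxe.norm
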